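/- Let n ≥ 2 and 0 ≤ r ≤ n, and place r distinguishable rooks independently and uniformly at random on the board B_n. Then the probability that no two rooks attack in the permutation sense, namely P(W_CC = 0) (no two rooks share a column), equals r! · s(n, n−r) / binomial(n,2)^r. Equivalently, the number of r-element subsets of B_n in which all second coordinates are pairwise distinct equals the unsigned Stirling number of the first kind s(n, n−r). -/

import Mathlib

open Finset Filter

/-- The triangular board `B_n = {(i,j) : 1 ≤ i < j ≤ n}`. -/
def board (n : ℕ) : Finset (ℕ × ℕ) :=
  (Finset.range (n + 1) ×ˢ Finset.range (n + 1)).filter fun p => 1 ≤ p.1 ∧ p.1 < p.2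

/-- Probability of event `E` when `r` distinguishable rooks are placed independently and
uniformly at random on `B_n`; a placement is a function `Fin r → ℕ × ℕ`, rook `a` sitting
on the square `f a = (row, column)`. -/
noncomputable def rookProb (n r : ℕ) (E : (Fin r → ℕ × ℕ) → Prop) : ℝ :=
  ({f : Fin r → ℕ × ℕ | (∀ a, f a ∈ board n) ∧ E f}.ncard : ℝ) / ((board n).card : ℝ) ^ r

/-- Number of (unordered) pairs of rooks lying in the same column. -/
def WCC (r : ℕ) (f : Fin r → ℕ × ℕ) : ℕ :=
  (Finset.univ.filter fun p : Fin r × Fin r => p.1 < p.2 ∧ (f p.1).2 = (f p.2).2).card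

/-- The number of cycles of a permutation, counting fixed points as cycles of length one. -/
def numCycles {n : ℕ} (σ : Equiv.Perm (Fin n)) : ℕ :=
  σ.cycleType.card + (Finset.univ.filter fun x => σ x = x).card

/-- `s(n,k)`, the unsigned Stirling number of the first kind: the number of permutations of a
set of size `n` having exactly `k` cycles (fixed points count as cycles). -/
noncomputable def stirling1 (n k : ℕ) : ℕ :=
  Nat.card {σ : Equiv.Perm (Fin n) // numCycles σ = k}

/-!
A column-distinct placement on `B_{n+1}` either avoids the last column or has exactly one rook
there, in one of `n` rows; so the number of `r`-sets satisfies
`c(n+1, r+1) = c(n, r+1) + n c(n, r)`. Permutations obey the same recurrence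
`s(n+1, k+1) = n s(n, k+1) + s(n, k)`, which defines `Nat.stirlingFirst`: writing `σ ∈ S_{n+1}`
as `swap 0 p * τ` with `τ 0 = 0` (`Equiv.Perm.decomposeFin`), `σ` has one cycle less than `τ`
unless `p = 0`, because attaching the fixed point `0` to the cycle of `p` merges two cycles.
Ordered placements are `r!` times the unordered ones since the rooks in a column-distinct
placement occupy distinct squares.
-/

open Equiv Equiv.Perm

namespace Equiv.Perm

variable {α : Type*} [Fintype α] [DecidableEq α]

theorem card_cycleType_swap_mul_of_apply_apply_ne {g : Perm α} {x : α} (hx : g x ≠ x)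
    (hgx : g (g x) ≠ x) : (swap x (g x) * g).cycleType.card = g.cycleType.card := by
  set c := g.cycleOf x
  have hc : c ∈ g.cycleFactorsFinset := cycleOf_mem_cycleFactorsFinset_iff.2 (mem_support.2 hx)
  have hcycle : c.IsCycle := g.isCycle_cycleOf hx
  have hcx : c x = g x := g.cycleOf_apply_self x
  have hccx : c (c x) ≠ x := by rwa [hcx, g.cycleOf_apply_apply_self]
  set d := g * c⁻¹
  have hcd : Disjoint c d := (disjoint_mul_inv_of_mem_cycleFactorsFinset hc).symm
  have hg : g = c * d := by rw [hcd.commute.eq]; simp [d]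
  have hd : Disjoint (swap x (c x) * c) d :=
    hcd.mono (by rw [support_swap_mul_eq c x hccx]; exact Finset.sdiff_subset) le_rfl
  rw [← hcx, hg, ← mul_assoc, hd.cycleType_mul, hcd.cycleType_mul,
    (hcycle.swap_mul (hcx ▸ hx) hccx).cycleType, hcycle.cycleType]
  simp

/-- Counting fixed points as cycles, attaching the fixed point `b` to the cycle of `a` removes
one cycle. -/
theorem card_cycleType_swap_mul_add_card_support {f : Perm α} {a b : α} (hb : f b = b)
    (hab : a ≠ b) :
    (swap a b * f).cycleType.card + #f.support + 1 =
      f.cycleType.card + #(swap a b * f).support := by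
  by_cases ha : f a = a
  · have hdisj : Disjoint (swap a b) f := by
      rw [disjoint_iff_disjoint_support, support_swap hab]
      simp [ha, hb]
    rw [hdisj.cycleType_mul, hdisj.support_mul, (isCycle_swap hab).cycleType,
      card_union_of_disjoint hdisj.disjoint_support, support_swap hab, card_pair hab,
      Multiset.card_add, Multiset.card_singleton]
    omega
  · set g := swap a b * f
    have hgb : g b = a := by simp [g, hb]
    have hfa : f a ≠ b := fun h => hab (f.injective (h.trans hb.symm))
    have hgga : g (g b) ≠ b := by
      rw [hgb]; simpa [g, swap_apply_of_ne_of_ne ha hfa] using hfa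
    have hf : swap b (g b) * g = f := by simp [g, hgb, swap_comm, ← mul_assoc]
    have hsupp := support_swap_mul_eq g b hgga
    rw [hf] at hsupp
    have hbg : b ∈ g.support := mem_support.2 (by rw [hgb]; exact hab)
    rw [← card_cycleType_swap_mul_of_apply_apply_ne (hgb ▸ hab) hgga, hf, hsupp,
      card_sdiff_of_subset (singleton_subset_iff.2 hbg), card_singleton]
    have := card_pos.2 ⟨b, hbg⟩
    omega

end Equiv.Perm

theorem numCycles_add_card_support {n : ℕ} (σ : Perm (Fin n)) :
    numCycles σ + #σ.support = σ.cycleType.card + n := by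
  rw [numCycles, add_assoc, support, card_filter_add_card_filter_not, card_univ,
    Fintype.card_fin]

theorem decomposeFin_symm_eq_swap_mul {n : ℕ} (p : Fin (n + 1)) (e : Perm (Fin n)) :
    decomposeFin.symm (p, e) = swap 0 p * decomposeFin.symm (0, e) := by
  ext x
  refine Fin.cases ?_ (fun i => ?_) x <;> simp

theorem decomposeFin_symm_zero {n : ℕ} (e : Perm (Fin n)) :
    decomposeFin.symm (0, e) = e.extendDomain (finSuccAboveEquiv 0) := by
  ext x
  refine Fin.cases ?_ (fun i => ?_) x
  · rw [decomposeFin_symm_apply_zero, extendDomain_apply_not_subtype _ _ (by simp)]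
  · have hi : i.succ = (finSuccAboveEquiv (0 : Fin (n + 1)) i : Fin (n + 1)) := by
      simp [finSuccAboveEquiv_apply]
    rw [decomposeFin_symm_apply_succ, hi, extendDomain_apply_image]
    simp [finSuccAboveEquiv_apply]

theorem numCycles_decomposeFin_symm {n : ℕ} (p : Fin (n + 1)) (e : Perm (Fin n)) :
    numCycles (decomposeFin.symm (p, e)) = numCycles e + if p = 0 then 1 else 0 := by
  have h₀ : numCycles (decomposeFin.symm (0, e)) = numCycles e + 1 := by
    have h := numCycles_add_card_support (decomposeFin.symm (0, e))
    rw [decomposeFin_symm_zero, cycleType_extendDomain, card_support_extend_domain] at h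
    have := numCycles_add_card_support e
    rw [decomposeFin_symm_zero]
    omega
  split_ifs with hp
  · rw [hp, h₀]
  · have hfix : decomposeFin.symm (0, e) 0 = 0 := by simp
    have h := card_cycleType_swap_mul_add_card_support hfix hp
    rw [swap_comm] at h
    have := numCycles_add_card_support (decomposeFin.symm (0, e))
    have := numCycles_add_card_support (swap 0 p * decomposeFin.symm (0, e))
    rw [decomposeFin_symm_eq_swap_mul]
    omega

theorem stirling1_succ (n k : ℕ) :
    stirling1 (n + 1) k =
      n * stirling1 n k + Nat.card {e : Perm (Fin n) // numCycles e + 1 = k} := by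
  rw [stirling1, ← Nat.card_congr (decomposeFin.symm.subtypeEquiv fun _ => Iff.rfl)]
  simp only [Nat.card_eq_fintype_card, Fintype.card_subtype]
  rw [card_filter, Fintype.sum_prod_type, Fin.sum_univ_succ]
  simp only [numCycles_decomposeFin_symm, Fin.succ_ne_zero, if_true, if_false, add_zero,
    ← card_filter, sum_const, card_univ, Fintype.card_fin, smul_eq_mul, stirling1,
    Nat.card_eq_fintype_card, Fintype.card_subtype]
  exact add_comm _ _

theorem stirling1_eq_stirlingFirst (n k : ℕ) : stirling1 n k = Nat.stirlingFirst n k := by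
  induction n generalizing k with
  | zero =>
    have h : numCycles (1 : Perm (Fin 0)) = 0 := by simp [numCycles]
    cases k <;> simp [stirling1, Subsingleton.elim _ (1 : Perm (Fin 0)), h]
  | succ n ih =>
    rw [stirling1_succ, ih]
    cases k with
    | zero => cases n <;> simp
    | succ k =>
      simp only [Nat.add_right_cancel_iff]
      rw [← stirling1, ih, Nat.stirlingFirst_succ_succ]

theorem mem_board {n : ℕ} {p : ℕ × ℕ} :
    p ∈ board n ↔ 1 ≤ p.1 ∧ p.1 < p.2 ∧ p.2 ≤ n := by
  simp only [board, mem_filter, mem_product, mem_range]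
  omega

theorem board_succ (n : ℕ) :
    board (n + 1) = board n ∪ (Icc 1 n).image fun i => (i, n + 1) := by
  ext ⟨i, j⟩
  simp only [mem_union, mem_image, mem_board, mem_Icc, Prod.mk.injEq]
  constructor
  · intro h
    by_cases hj : j = n + 1
    · exact Or.inr ⟨i, by omega, rfl, hj.symm⟩
    · exact Or.inl (by omega)
  · rintro (h | ⟨i, hi, rfl, rfl⟩) <;> omega

theorem card_board (n : ℕ) : #(board n) = n.choose 2 := by
  induction n with
  | zero => rfl
  | succ n ih =>
    rw [board_succ, card_union_of_disjoint, ih,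
      card_image_of_injective _ (fun _ _ h => by simpa using h), Nat.card_Icc,
      Nat.choose_succ_succ', Nat.choose_one_right, add_comm, Nat.add_sub_cancel]
    rw [disjoint_right]
    rintro _ hp hp'
    obtain ⟨i, -, rfl⟩ := mem_image.1 hp
    have := mem_board.1 hp'
    omega

theorem board_subset_board_succ (n : ℕ) : board n ⊆ board (n + 1) :=
  board_succ n ▸ subset_union_left

theorem notMem_board_succ (n i : ℕ) : (i, n + 1) ∉ board n := by
  simp [mem_board]

def colDistinct (n r : ℕ) : Finset (Finset (ℕ × ℕ)) :=
  ((board n).powersetCard r).filter fun s => Set.InjOn Prod.snd (s : Set (ℕ × ℕ))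

section colDistinct

variable {n r : ℕ}

theorem mem_colDistinct {s : Finset (ℕ × ℕ)} :
    s ∈ colDistinct n r ↔
      s ⊆ board n ∧ #s = r ∧ Set.InjOn Prod.snd (s : Set (ℕ × ℕ)) := by
  simp [colDistinct, mem_powersetCard, and_assoc]

theorem colDistinct_zero (n : ℕ) : colDistinct n 0 = {∅} := by
  simp [colDistinct]

theorem colDistinct_eq_empty_of_lt (h : n < r) : colDistinct n r = ∅ := by
  refine eq_empty_of_forall_notMem fun s hs => ?_
  obtain ⟨hsub, rfl, hinj⟩ := mem_colDistinct.1 hs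
  have hcols : s.image Prod.snd ⊆ Icc 1 n := by
    intro j hj
    obtain ⟨p, hp, rfl⟩ := mem_image.1 hj
    have := mem_board.1 (hsub hp)
    rw [mem_Icc]
    omega
  have := card_le_card hcols
  rw [card_image_of_injOn hinj, Nat.card_Icc] at this
  omega

theorem filter_subset_board_colDistinct_succ (n r : ℕ) :
    (colDistinct (n + 1) r).filter (· ⊆ board n) = colDistinct n r := by
  ext s
  simp only [mem_filter, mem_colDistinct]
  constructor
  · rintro ⟨⟨-, hcard, hinj⟩, hsub⟩
    exact ⟨hsub, hcard, hinj⟩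
  · rintro ⟨hsub, hcard, hinj⟩
    exact ⟨⟨hsub.trans (board_subset_board_succ n), hcard, hinj⟩, hsub⟩

theorem filter_not_subset_board_colDistinct_succ (n r : ℕ) :
    (colDistinct (n + 1) (r + 1)).filter (¬ · ⊆ board n) =
      (Icc 1 n ×ˢ colDistinct n r).image fun x => insert (x.1, n + 1) x.2 := by
  ext s
  simp only [mem_filter, mem_image, mem_product, mem_Icc, Prod.exists]
  constructor
  · rintro ⟨hs, hout⟩
    obtain ⟨hsub, hcard, hinj⟩ := mem_colDistinct.1 hs
    obtain ⟨p, hp, hpn⟩ := not_subset.1 hout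
    have hpb := mem_board.1 (hsub hp)
    have hp2 : p.2 = n + 1 := by
      by_contra h
      exact hpn (mem_board.2 (by omega))
    refine ⟨p.1, s.erase p, ⟨by omega, mem_colDistinct.2 ⟨fun q hq => ?_, ?_, ?_⟩⟩, ?_⟩
    · have hqs := mem_of_mem_erase hq
      have hqb := mem_board.1 (hsub hqs)
      have hq2 : q.2 ≠ p.2 := fun h => ne_of_mem_erase hq (hinj hqs hp h)
      exact mem_board.2 (by omega)
    · rw [card_erase_of_mem hp, hcard, Nat.add_sub_cancel]
    · exact hinj.mono (by simp)
    · rw [← hp2, insert_erase hp]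
  · rintro ⟨i, t, ⟨hi, ht⟩, rfl⟩
    obtain ⟨hsub, hcard, hinj⟩ := mem_colDistinct.1 ht
    have htop : (i, n + 1) ∉ t := fun h => notMem_board_succ n i (hsub h)
    refine ⟨mem_colDistinct.2 ⟨insert_subset ?_ ?_, ?_, ?_⟩, ?_⟩
    · exact mem_board.2 (by omega)
    · exact hsub.trans (board_subset_board_succ n)
    · rw [card_insert_of_notMem htop, hcard]
    · rw [coe_insert, Set.injOn_insert (by simpa using htop)]
      refine ⟨hinj, fun ⟨q, hq, hq2⟩ => ?_⟩
      have := mem_board.1 (hsub hq)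
      omega
    · exact fun h => notMem_board_succ n i (h (mem_insert_self _ _))

theorem card_colDistinct_succ_succ (n r : ℕ) :
    #(colDistinct (n + 1) (r + 1)) = #(colDistinct n (r + 1)) + n * #(colDistinct n r) := by
  have hinj : Set.InjOn (fun x : ℕ × Finset (ℕ × ℕ) => insert (x.1, n + 1) x.2)
      (Icc 1 n ×ˢ colDistinct n r : Finset _) := by
    rintro ⟨i, t⟩ hit ⟨j, u⟩ hju (h : insert (i, n + 1) t = insert (j, n + 1) u)
    simp only [coe_product, Set.mem_prod, mem_coe, mem_colDistinct] at hit hju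
    have hnt : ∀ k, (k, n + 1) ∉ t := fun k hk => notMem_board_succ n k (hit.2.1 hk)
    have hnu : ∀ k, (k, n + 1) ∉ u := fun k hk => notMem_board_succ n k (hju.2.1 hk)
    have hij : i = j := by
      have := h ▸ mem_insert_self (i, n + 1) t
      simpa [hnu] using this
    subst hij
    rw [← erase_insert (hnt i), h, erase_insert (hnu i)]
  rw [← card_filter_add_card_filter_not (s := colDistinct (n + 1) (r + 1)) (· ⊆ board n),
    filter_subset_board_colDistinct_succ, filter_not_subset_board_colDistinct_succ,
    card_image_of_injOn hinj, card_product, Nat.card_Icc, Nat.add_sub_cancel]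

theorem card_colDistinct (h : r ≤ n) : #(colDistinct n r) = Nat.stirlingFirst n (n - r) := by
  induction n generalizing r with
  | zero =>
    obtain rfl : r = 0 := by omega
    simp [colDistinct_zero]
  | succ n ih =>
    cases r with
    | zero => simp [colDistinct_zero, Nat.stirlingFirst_self]
    | succ r =>
      rw [card_colDistinct_succ_succ, ih (by omega : r ≤ n), Nat.add_sub_add_right]
      rcases Nat.lt_or_ge r n with hlt | hge
      · rw [ih hlt, Nat.stirlingFirst_succ_left _ _ (by omega), Nat.sub_succ', add_comm]
      · obtain rfl : r = n := by omega
        rw [colDistinct_eq_empty_of_lt (Nat.lt_succ_self r)]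
        cases r <;> simp

end colDistinct

theorem image_univ_coe_equiv {α : Type*} [DecidableEq α] {r : ℕ} {s : Finset α}
    (e : Fin r ≃ s) :
    univ.image (fun a => (e a : α)) = s := by
  ext x
  simp only [mem_image, mem_univ, true_and]
  exact ⟨fun ⟨a, ha⟩ => ha ▸ (e a).2, fun hx => ⟨e.symm ⟨x, hx⟩, by simp⟩⟩

theorem ncard_setOf_injective_image_mem {α : Type*} [DecidableEq α] {r : ℕ}
    (S : Finset (Finset α)) (hS : ∀ s ∈ S, #s = r) :
    {f : Fin r → α | f.Injective ∧ univ.image f ∈ S}.ncard = r.factorial * #S := by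
  let enum (s : Finset α) : Finset (Fin r → α) :=
    (univ : Finset (Fin r ≃ s)).image fun e a => (e a : α)
  have hset : {f : Fin r → α | f.Injective ∧ univ.image f ∈ S} = ↑(S.biUnion enum) := by
    ext f
    simp only [Set.mem_ofPred_eq, coe_biUnion, mem_coe, Set.mem_iUnion, exists_prop, enum,
      mem_image, mem_univ, true_and]
    constructor
    · rintro ⟨hinj, hmem⟩
      refine ⟨_, hmem, Equiv.ofBijective (fun a => ⟨f a, mem_image_of_mem f (mem_univ a)⟩)
        ⟨fun a b h => hinj (congrArg Subtype.val h), fun ⟨x, hx⟩ => ?_⟩, rfl⟩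
      obtain ⟨a, -, rfl⟩ := mem_image.1 hx
      exact ⟨a, rfl⟩
    · rintro ⟨s, hs, e, rfl⟩
      exact ⟨Subtype.val_injective.comp e.injective, (image_univ_coe_equiv e).symm ▸ hs⟩
  have hcard : ∀ s ∈ S, #(enum s) = r.factorial := by
    intro s hs
    rw [card_image_of_injective _ fun e e' h => Equiv.ext fun a => Subtype.ext (congrFun h a),
      card_univ, Fintype.card_equiv (Fintype.equivOfCardEq (by simp [hS s hs])),
      Fintype.card_fin]
  have hdisj : (S : Set (Finset α)).PairwiseDisjoint enum := by
    intro s _ t _ hst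
    refine disjoint_left.2 fun f hfs hft => hst ?_
    obtain ⟨e, -, rfl⟩ := mem_image.1 hfs
    obtain ⟨e', -, he'⟩ := mem_image.1 hft
    rw [← image_univ_coe_equiv e, ← image_univ_coe_equiv e', he']
  rw [hset, Set.ncard_coe_finset, card_biUnion hdisj, sum_congr rfl hcard, sum_const,
    smul_eq_mul, mul_comm]

theorem WCC_eq_zero_iff {r : ℕ} {f : Fin r → ℕ × ℕ} :
    WCC r f = 0 ↔ Function.Injective fun a => (f a).2 := by
  rw [WCC, card_eq_zero, filter_eq_empty_iff]
  constructor
  · intro h a b hab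
    by_contra hne
    rcases lt_or_gt_of_ne hne with hlt | hlt
    · exact h (mem_univ (a, b)) ⟨hlt, hab⟩
    · exact h (mem_univ (b, a)) ⟨hlt, hab.symm⟩
  · rintro hinj ⟨a, b⟩ - ⟨hlt, hab⟩
    exact hlt.ne (hinj hab)

theorem setOf_board_WCC_eq_zero (n r : ℕ) :
    {f : Fin r → ℕ × ℕ | (∀ a, f a ∈ board n) ∧ WCC r f = 0} =
      {f | f.Injective ∧ univ.image f ∈ colDistinct n r} := by
  ext f
  simp only [Set.mem_ofPred_eq, WCC_eq_zero_iff, mem_colDistinct]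
  constructor
  · rintro ⟨hboard, hcol⟩
    refine ⟨hcol.of_comp, fun p hp => ?_, ?_, ?_⟩
    · obtain ⟨a, -, rfl⟩ := mem_image.1 hp
      exact hboard a
    · rw [card_image_of_injective _ hcol.of_comp, card_univ, Fintype.card_fin]
    · rw [coe_image]
      rintro _ ⟨a, -, rfl⟩ _ ⟨b, -, rfl⟩ h
      rw [hcol h]
  · rintro ⟨hinj, hsub, -, hcol⟩
    refine ⟨fun a => hsub (mem_image_of_mem f (mem_univ a)), fun a b h => hinj ?_⟩
    exact hcol (by simp) (by simp) h

theorem setOf_colDistinct (n r : ℕ) :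
    {s : Finset (ℕ × ℕ) |
        s ⊆ board n ∧ s.card = r ∧ ∀ p ∈ s, ∀ q ∈ s, p ≠ q → p.2 ≠ q.2} =
      ↑(colDistinct n r) := by
  ext s
  simp only [Set.mem_ofPred_eq, mem_coe, mem_colDistinct, Set.InjOn, ne_eq, not_imp_not]

theorem no_attack_permutation_general (n r : ℕ) (hr : r ≤ n) :
    rookProb n r (fun f => WCC r f = 0)
        = (r.factorial : ℝ) * (stirling1 n (n - r) : ℝ) / (n.choose 2 : ℝ) ^ r ∧
    {s : Finset (ℕ × ℕ) | s ⊆ board n ∧ s.card = r ∧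
        (∀ p ∈ s, ∀ q ∈ s, p ≠ q → p.2 ≠ q.2)}.ncard = stirling1 n (n - r) := by
  have hcount : #(colDistinct n r) = stirling1 n (n - r) := by
    rw [card_colDistinct hr, stirling1_eq_stirlingFirst]
  constructor
  · rw [rookProb, setOf_board_WCC_eq_zero,
      ncard_setOf_injective_image_mem _ fun s hs => (mem_colDistinct.1 hs).2.1, hcount,
      card_board]
    push_cast
    ring
  · rw [setOf_colDistinct, Set.ncard_coe_finset, hcount]

/-- placing `r ≤ n` distinguishable rooks independently and uniformly at random on
`B_n`, `n ≥ 2`, the probability that no two rooks attack in the permutation sense (no two in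
the same column) equals `r!·s(n, n−r)/C(n,2)^r`; equivalently, the number of `r`-element
subsets of `B_n` whose second coordinates are pairwise distinct equals `s(n, n−r)`. -/
theorem no_attack_permutation (n r : ℕ) (hn : 2 ≤ n) (hr : r ≤ n) :
    rookProb n r (fun f => WCC r f = 0)
        = (r.factorial : ℝ) * (stirling1 n (n - r) : ℝ) / (n.choose 2 : ℝ) ^ r ∧
    {s : Finset (ℕ × ℕ) | s ⊆ board n ∧ s.card = r ∧
        (∀ p ∈ s, ∀ q ∈ s, p ≠ q → p.2 ≠ q.2)}.ncard = stirling1 n (n - r) :=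
  no_attack_permutation_general n r hr
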